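/- Let β = {W_1,…,W_q} be a partition in NC(n). Then the number of α ∈ NC(n) with α ≪ β equals the product over j = 1,…,q of the Catalan numbers Cat_{|W_j|−1}. -/

import Mathlib

open scoped Classical

/-- The minimum of a finset of naturals (`0` if empty). -/
noncomputable def fmin (A : Finset ℕ) : ℕ := sInf (A : Set ℕ)

/-- The maximum of a finset of naturals (`0` if empty). -/
noncomputable def fmax (A : Finset ℕ) : ℕ := sSup (A : Set ℕ)

/-- `α` is a partition of the finite set `F ⊆ ℕ`. -/
def IsPartitionOfSet (F : Finset ℕ) (α : Finset (Finset ℕ)) : Prop :=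
  (∀ V ∈ α, V.Nonempty) ∧ (∀ V ∈ α, V ⊆ F) ∧ (∀ m ∈ F, ∃ V ∈ α, m ∈ V) ∧
    ∀ V ∈ α, ∀ W ∈ α, V ≠ W → V ∩ W = ∅

/-- `α` is a partition of `{1,…,n}`. -/
def IsPartitionOf (n : ℕ) (α : Finset (Finset ℕ)) : Prop :=
  IsPartitionOfSet (Finset.Icc 1 n) α

/-- Two distinct blocks of the family `π` cross: there are `a < b < c < d` with
`a, c` in one block and `b, d` in a different block. -/
def IsCrossing (π : Finset (Finset ℕ)) : Prop :=
  ∃ A ∈ π, ∃ B ∈ π, A ≠ B ∧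
    ∃ a ∈ A, ∃ b ∈ B, ∃ c ∈ A, ∃ d ∈ B, a < b ∧ b < c ∧ c < d

/-- `α ∈ NC(n)`: a non-crossing partition of `{1,…,n}`. -/
def IsNCPartition (n : ℕ) (α : Finset (Finset ℕ)) : Prop :=
  IsPartitionOf n α ∧ ¬ IsCrossing α

/-- Reverse refinement order `α ≤ β`: every block of `α` is contained in a block of `β`
(equivalently, every block of `β` is a union of blocks of `α`). -/
def Refines (α β : Finset (Finset ℕ)) : Prop := ∀ V ∈ α, ∃ W ∈ β, V ⊆ W

/-- The partial order `α ≪ β`: `α ≤ β` and for every block `W` of `β` there is a block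
`V` of `α` containing both `min W` and `max W`. -/
def LL (α β : Finset (Finset ℕ)) : Prop :=
  Refines α β ∧ ∀ W ∈ β, ∃ V ∈ α, fmin W ∈ V ∧ fmax W ∈ V

/-- A block `V` (of `α`) is `β`-special: some block `W` of `β` has the same min and max. -/
def SpecialBlock (β : Finset (Finset ℕ)) (V : Finset ℕ) : Prop :=
  ∃ W ∈ β, fmin V = fmin W ∧ fmax V = fmax W

/-- `V` is an outer block of `α`: no block of `α` strictly nests around it. -/
def OuterBlock (α : Finset (Finset ℕ)) (V : Finset ℕ) : Prop :=
  ∀ V' ∈ α, ¬ (fmin V' < fmin V ∧ fmax V < fmax V')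

/-- `π` is a linked partition of the finite set `F ⊆ ℕ`. -/
def IsLinkedPartitionOfSet (F : Finset ℕ) (π : Finset (Finset ℕ)) : Prop :=
  (∀ A ∈ π, A.Nonempty) ∧ (∀ A ∈ π, A ⊆ F) ∧ (∀ m ∈ F, ∃ A ∈ π, m ∈ A) ∧
    ∀ A ∈ π, ∀ B ∈ π, A ≠ B →
      A ∩ B = ∅ ∨
        (2 ≤ A.card ∧ 2 ≤ B.card ∧ (A ∩ B).card = 1 ∧ fmin A ≠ fmin B ∧
          ∀ x ∈ A ∩ B, x = fmin A ∨ x = fmin B)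

/-- `π ∈ NCL(F)`: a non-crossing linked partition of the finite set `F`. -/
def IsNCLOfSet (F : Finset ℕ) (π : Finset (Finset ℕ)) : Prop :=
  IsLinkedPartitionOfSet F π ∧ ¬ IsCrossing π

/-- `π ∈ NCL(n)`: a non-crossing linked partition of `{1,…,n}`. -/
def IsNCL (n : ℕ) (π : Finset (Finset ℕ)) : Prop :=
  IsNCLOfSet (Finset.Icc 1 n) π

/-- The number of blocks of `π` containing `m`. -/
noncomputable def coverCount (π : Finset (Finset ℕ)) (m : ℕ) : ℕ :=
  (π.filter fun A => m ∈ A).card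

/-- `m` is singly-covered by `π`: it lies in exactly one block. -/
def SinglyCovered (π : Finset (Finset ℕ)) (m : ℕ) : Prop := coverCount π m = 1

/-- `m` is doubly-covered by `π`: it lies in exactly two blocks. -/
def DoublyCovered (π : Finset (Finset ℕ)) (m : ℕ) : Prop := coverCount π m = 2

/-- The partition `π̂` generated by the blocks of `π`: its blocks are the connected
components of the ground set under the relation of lying in a common block of `π`. -/
noncomputable def genPart (π : Finset (Finset ℕ)) : Finset (Finset ℕ) :=
  (π.sup id).image fun m =>
    (π.sup id).filter fun x =>
      Relation.EqvGen (fun a b => ∃ A ∈ π, a ∈ A ∧ b ∈ A) m x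

/-- The unlinking `π̌` of a linked partition `π`. -/
noncomputable def unlink (π : Finset (Finset ℕ)) : Finset (Finset ℕ) :=
  π.image fun A => if SinglyCovered π (fmin A) then A else A.erase (fmin A)

/-- The block of `α` containing `m` (empty if there is none). -/
noncomputable def blockOf (α : Finset (Finset ℕ)) (m : ℕ) : Finset ℕ :=
  (α.filter fun V => m ∈ V).sup id

/-- The successor of `m` in the cycle on the block `V` (elements in increasing order). -/
noncomputable def nextInBlock (V : Finset ℕ) (m : ℕ) : ℕ :=
  if m = fmax V then fmin V else fmin (V.filter fun x => m < x)

/-- The predecessor of `m` in the cycle on the block `V`. -/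
noncomputable def prevInBlock (V : Finset ℕ) (m : ℕ) : ℕ :=
  if m = fmin V then fmax V else fmax (V.filter fun x => x < m)

/-- The permutation `P_α` associated to a partition `α`, as a function: each block
`{i₁ < i₂ < ⋯ < iₘ}` becomes the cycle `i₁ ↦ i₂ ↦ ⋯ ↦ iₘ ↦ i₁`. -/
noncomputable def permOf (α : Finset (Finset ℕ)) (m : ℕ) : ℕ :=
  if m ∈ blockOf α m then nextInBlock (blockOf α m) m else m

/-- The inverse permutation `P_α⁻¹`, as a function. -/
noncomputable def permOfInv (α : Finset (Finset ℕ)) (m : ℕ) : ℕ :=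
  if m ∈ blockOf α m then prevInBlock (blockOf α m) m else m

/-- The action `τ·α` of a map `τ` on a partition `α = {V₁,…,V_p}`, giving
`{τ(V₁),…,τ(V_p)}`. -/
def mapPart (τ : ℕ → ℕ) (α : Finset (Finset ℕ)) : Finset (Finset ℕ) :=
  α.image fun V => V.image τ

/-- The cycled unlinking `π° := P_{π̂}⁻¹ · π̌`. -/
noncomputable def cycUnlink (π : Finset (Finset ℕ)) : Finset (Finset ℕ) :=
  mapPart (permOfInv (genPart π)) (unlink π)

/-- `NC(n)` as a finset. -/
noncomputable def NCF (n : ℕ) : Finset (Finset (Finset ℕ)) :=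
  ((Finset.Icc 1 n).powerset.powerset).filter (IsNCPartition n)

/-- `NCL(n)` as a finset. -/
noncomputable def NCLF (n : ℕ) : Finset (Finset (Finset ℕ)) :=
  ((Finset.Icc 1 n).powerset.powerset).filter (IsNCL n)

/-- The restriction `π|_E`: the blocks of `π` contained in `E`. -/
def restrictL (π : Finset (Finset ℕ)) (E : Finset ℕ) : Finset (Finset ℕ) :=
  π.filter fun A => A ⊆ E

/-- The partition `β₀` obtained from `β` by leaving blocks of size `≤ 2` intact and
breaking each block `W` with `|W| ≥ 3` into the doubleton `{min W, max W}` together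
with `|W| - 2` singletons. -/
noncomputable def breakBlocks (β : Finset (Finset ℕ)) : Finset (Finset ℕ) :=
  β.biUnion fun W =>
    if W.card ≤ 2 then {W}
    else insert {fmin W, fmax W} ((W \ {fmin W, fmax W}).image fun x => ({x} : Finset ℕ))

/-!
Restricting to the blocks of `β` identifies the non-crossing partitions `α ≤ β` of `[n]` with the
families of non-crossing partitions of the blocks `W ∈ β` (any such family glues back because `β`
itself is non-crossing), and `α ≪ β` says that in each factor `min W` and `max W` share a block.
Removing `max W` from that block is a bijection onto `NC(W ∖ {max W})`, so each factor has
`Cat_{|W|-1}` elements once `|NC(F)| = Cat_{|F|}` is known for every finite `F ⊆ ℕ`. That is the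
Catalan recursion: if `j` is the largest element of the block of `min F`, then `α` splits into a
partition of `F ∩ [0, j]` joining its ends and an arbitrary one of `F ∩ (j, ∞)`, and the first
factor is again counted by removing `j`.
-/

open Finset

section MinMax

variable {A : Finset ℕ} {a x : ℕ}

lemma fmin_mem (h : A.Nonempty) : fmin A ∈ A := by
  exact_mod_cast Nat.sInf_mem (s := (A : Set ℕ)) (by exact_mod_cast h)

lemma fmin_le (h : x ∈ A) : fmin A ≤ x :=
  Nat.sInf_le (by exact_mod_cast h)

lemma fmax_mem (h : A.Nonempty) : fmax A ∈ A := by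
  exact_mod_cast Nat.sSup_mem (s := (A : Set ℕ)) (by exact_mod_cast h) A.finite_toSet.bddAbove

lemma le_fmax (h : x ∈ A) : x ≤ fmax A :=
  le_csSup A.finite_toSet.bddAbove (by exact_mod_cast h)

lemma fmin_eq (ha : a ∈ A) (h : ∀ x ∈ A, a ≤ x) : fmin A = a :=
  le_antisymm (fmin_le ha) (h _ (fmin_mem ⟨a, ha⟩))

lemma fmax_eq (ha : a ∈ A) (h : ∀ x ∈ A, x ≤ a) : fmax A = a :=
  le_antisymm (h _ (fmax_mem ⟨a, ha⟩)) (le_fmax ha)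

end MinMax

section Crossing

variable {π π' γ : Finset (Finset ℕ)} {S T : Finset ℕ}

lemma IsCrossing.of_subset_blocks (f : Finset ℕ → Finset ℕ) (hf : ∀ X ∈ π, f X ∈ π' ∧ X ⊆ f X)
    (hinj : Set.InjOn f π) : IsCrossing π → IsCrossing π' := by
  rintro ⟨A, hA, B, hB, hAB, a, ha, b, hb, c, hc, d, hd, hab, hbc, hcd⟩
  exact ⟨f A, (hf A hA).1, f B, (hf B hB).1, fun h => hAB (hinj hA hB h),
    a, (hf A hA).2 ha, b, (hf B hB).2 hb, c, (hf A hA).2 hc, d, (hf B hB).2 hd, hab, hbc, hcd⟩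

lemma IsCrossing.mono (h : π ⊆ π') : IsCrossing π → IsCrossing π' :=
  IsCrossing.of_subset_blocks id (fun _ hX => ⟨h hX, subset_rfl⟩) (Set.injOn_id _)

lemma IsCrossing.of_insert_erase (hS : S ∈ γ) (hTS : T ⊆ S) :
    IsCrossing (insert T (γ.erase S)) → IsCrossing γ := by
  refine IsCrossing.of_subset_blocks (fun X => if X = T then S else X) ?_ ?_
  · intro X hX
    by_cases hXT : X = T
    · simp only [hXT, if_true]; exact ⟨hS, hTS⟩
    · simp only [hXT, if_false]
      exact ⟨mem_of_mem_erase ((mem_insert.1 hX).resolve_left hXT), subset_rfl⟩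
  · intro X hX Y hY hXY
    have ne_S : ∀ Z ∈ insert T (γ.erase S), Z ≠ T → Z ≠ S := fun Z hZ hZT =>
      ne_of_mem_erase ((mem_insert.1 hZ).resolve_left hZT)
    by_cases hXT : X = T <;> by_cases hYT : Y = T <;> simp only [hXT, hYT, if_true, if_false] at hXY
    · exact hXT.trans hYT.symm
    · exact absurd hXY.symm (ne_S Y hY hYT)
    · exact absurd hXY (ne_S X hX hXT)
    · exact hXY

lemma not_isCrossing_pair {L R : Finset ℕ} (h : ∀ x ∈ L, ∀ y ∈ R, x < y) :
    ¬ IsCrossing {L, R} := by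
  rintro ⟨A, hA, B, hB, hAB, a, ha, b, hb, c, hc, d, hd, hab, hbc, hcd⟩
  simp only [mem_insert, mem_singleton] at hA hB
  rcases hA with rfl | rfl <;> rcases hB with rfl | rfl
  · exact hAB rfl
  · exact absurd (h c hc b hb) (by omega)
  · exact absurd (h b hb a ha) (by omega)
  · exact hAB rfl

end Crossing

section Partitions

/-- `IsPartitionOfSet` with empty blocks allowed, so that a split `{F ∩ [0, j], F ∩ (j, ∞)}`
qualifies even when one part is empty. -/
def IsDisjointCover (F : Finset ℕ) (β : Finset (Finset ℕ)) : Prop :=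
  (∀ W ∈ β, W ⊆ F) ∧ (∀ m ∈ F, ∃ W ∈ β, m ∈ W) ∧ ∀ V ∈ β, ∀ W ∈ β, V ≠ W → V ∩ W = ∅

def IsNCPartitionOfSet (F : Finset ℕ) (α : Finset (Finset ℕ)) : Prop :=
  IsPartitionOfSet F α ∧ ¬ IsCrossing α

noncomputable def ncPartitions (F : Finset ℕ) : Finset (Finset (Finset ℕ)) :=
  F.powerset.powerset.filter (IsNCPartitionOfSet F)

variable {F : Finset ℕ} {α β : Finset (Finset ℕ)} {V W : Finset ℕ} {m : ℕ}

lemma IsPartitionOfSet.isDisjointCover (h : IsPartitionOfSet F α) : IsDisjointCover F α := h.2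

lemma IsDisjointCover.eq_of_mem (hβ : IsDisjointCover F β) (hV : V ∈ β) (hW : W ∈ β)
    (hmV : m ∈ V) (hmW : m ∈ W) : V = W := by
  by_contra hne
  simpa [hβ.2.2 V hV W hW hne] using mem_inter.2 ⟨hmV, hmW⟩

lemma IsPartitionOfSet.eq_of_mem (h : IsPartitionOfSet F α) (hV : V ∈ α) (hW : W ∈ α)
    (hmV : m ∈ V) (hmW : m ∈ W) : V = W :=
  h.isDisjointCover.eq_of_mem hV hW hmV hmW

lemma blockOf_eq (h : IsPartitionOfSet F α) (hV : V ∈ α) (hm : m ∈ V) : blockOf α m = V := by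
  have : α.filter (m ∈ ·) = {V} :=
    eq_singleton_iff_unique_mem.2 ⟨mem_filter.2 ⟨hV, hm⟩, fun W hW =>
      h.eq_of_mem (mem_filter.1 hW).1 hV (mem_filter.1 hW).2 hm⟩
  rw [blockOf, this, sup_singleton, id]

lemma IsPartitionOfSet.blockOf_mem (h : IsPartitionOfSet F α) (hm : m ∈ F) :
    blockOf α m ∈ α ∧ m ∈ blockOf α m := by
  obtain ⟨V, hV, hmV⟩ := h.2.2.1 m hm
  rw [blockOf_eq h hV hmV]
  exact ⟨hV, hmV⟩

lemma mem_ncPartitions : α ∈ ncPartitions F ↔ IsNCPartitionOfSet F α := by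
  refine mem_filter.trans ⟨fun h => h.2, fun h => ⟨?_, h⟩⟩
  exact mem_powerset.2 fun V hV => mem_powerset.2 (h.1.2.1 V hV)

lemma ncPartitions_empty : ncPartitions ∅ = {∅} := by
  refine eq_singleton_iff_unique_mem.2 ⟨mem_ncPartitions.2 ⟨⟨?_, ?_, ?_, ?_⟩, ?_⟩, ?_⟩
  all_goals simp only [mem_ncPartitions, IsCrossing, notMem_empty, false_imp_iff, imp_true_iff,
    false_and, exists_false, not_false_eq_true]
  rintro α ⟨⟨hne, hsub, -⟩, -⟩
  exact eq_empty_of_forall_notMem fun V hV => (hne V hV).ne_empty (subset_empty.1 (hsub V hV))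

lemma ncPartitions_singleton (x : ℕ) : ncPartitions {x} = {{{x}}} := by
  refine eq_singleton_iff_unique_mem.2
    ⟨mem_ncPartitions.2 ⟨⟨by simp, by simp, by simp, by simp⟩, ?_⟩, ?_⟩
  · rintro ⟨A, hA, B, hB, hAB, -⟩
    exact hAB ((mem_singleton.1 hA).trans (mem_singleton.1 hB).symm)
  · intro α hα
    obtain ⟨hα, -⟩ := mem_ncPartitions.1 hα
    have block_eq : ∀ V ∈ α, V = {x} := fun V hV =>
      (Nonempty.subset_singleton_iff (hα.1 V hV)).1 (hα.2.1 V hV)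
    obtain ⟨V, hV, -⟩ := hα.2.2.1 x (mem_singleton_self x)
    exact eq_singleton_iff_unique_mem.2 ⟨block_eq V hV ▸ hV, block_eq⟩

end Partitions

section Glue

def glue (β : Finset (Finset ℕ)) (g : ∀ W ∈ β, Finset (Finset ℕ)) : Finset (Finset ℕ) :=
  β.attach.biUnion fun W => g W.1 W.2

variable {F : Finset ℕ} {α β : Finset (Finset ℕ)} {g : ∀ W ∈ β, Finset (Finset ℕ)}
  {V W : Finset ℕ}

lemma mem_glue : V ∈ glue β g ↔ ∃ W, ∃ hW : W ∈ β, V ∈ g W hW := by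
  simp [glue]

lemma glue_restrictL (h : Refines α β) : glue β (fun W _ => restrictL α W) = α := by
  ext V
  simp only [mem_glue, restrictL, mem_filter]
  exact ⟨fun ⟨_, _, hV, _⟩ => hV, fun hV => (h V hV).imp fun W hW => ⟨hW.1, hV, hW.2⟩⟩

lemma IsNCPartitionOfSet.restrictL (hα : IsNCPartitionOfSet F α) (hβ : IsDisjointCover F β)
    (hαβ : Refines α β) (hW : W ∈ β) : IsNCPartitionOfSet W (restrictL α W) := by
  have mem : ∀ {V}, V ∈ _root_.restrictL α W ↔ V ∈ α ∧ V ⊆ W := mem_filter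
  refine ⟨⟨fun V hV => hα.1.1 V (mem.1 hV).1, fun V hV => (mem.1 hV).2, ?_,
    fun V hV V' hV' => hα.1.2.2.2 V (mem.1 hV).1 V' (mem.1 hV').1⟩,
    fun h => hα.2 (h.mono (filter_subset _ _))⟩
  intro m hm
  obtain ⟨V, hV, hmV⟩ := hα.1.2.2.1 m (hβ.1 W hW hm)
  obtain ⟨W', hW', hVW'⟩ := hαβ V hV
  obtain rfl := hβ.eq_of_mem hW' hW (hVW' hmV) hm
  exact ⟨V, mem.2 ⟨hV, hVW'⟩, hmV⟩

lemma refines_glue (hg : ∀ W (hW : W ∈ β), IsNCPartitionOfSet W (g W hW)) :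
    Refines (glue β g) β := by
  intro V hV
  obtain ⟨W, hW, hV⟩ := mem_glue.1 hV
  exact ⟨W, hW, (hg W hW).1.2.1 V hV⟩

lemma restrictL_glue (hβ : IsDisjointCover F β)
    (hg : ∀ W (hW : W ∈ β), IsNCPartitionOfSet W (g W hW)) (hW : W ∈ β) :
    restrictL (glue β g) W = g W hW := by
  ext V
  simp only [restrictL, mem_filter, mem_glue]
  refine ⟨fun ⟨⟨W', hW', hV⟩, hVW⟩ => ?_, fun hV => ⟨⟨W, hW, hV⟩, (hg W hW).1.2.1 V hV⟩⟩
  obtain ⟨x, hx⟩ := (hg W' hW').1.1 V hV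
  obtain rfl := hβ.eq_of_mem hW' hW ((hg W' hW').1.2.1 V hV hx) (hVW hx)
  exact hV

lemma isNCPartitionOfSet_glue (hβ : IsDisjointCover F β) (hnc : ¬ IsCrossing β)
    (hg : ∀ W (hW : W ∈ β), IsNCPartitionOfSet W (g W hW)) : IsNCPartitionOfSet F (glue β g) := by
  have sub : ∀ W (hW : W ∈ β), ∀ V ∈ g W hW, V ⊆ W := fun W hW => (hg W hW).1.2.1
  refine ⟨⟨fun V hV => ?_, fun V hV => ?_, fun m hm => ?_, fun V hV V' hV' hne => ?_⟩, ?_⟩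
  · obtain ⟨W, hW, hV⟩ := mem_glue.1 hV
    exact (hg W hW).1.1 V hV
  · obtain ⟨W, hW, hV⟩ := mem_glue.1 hV
    exact (sub W hW V hV).trans (hβ.1 W hW)
  · obtain ⟨W, hW, hmW⟩ := hβ.2.1 m hm
    obtain ⟨V, hV, hmV⟩ := (hg W hW).1.2.2.1 m hmW
    exact ⟨V, mem_glue.2 ⟨W, hW, hV⟩, hmV⟩
  · obtain ⟨W, hW, hV⟩ := mem_glue.1 hV
    obtain ⟨W', hW', hV'⟩ := mem_glue.1 hV'
    refine eq_empty_of_forall_notMem fun x hx => hne ?_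
    obtain ⟨hxV, hxV'⟩ := mem_inter.1 hx
    obtain rfl := hβ.eq_of_mem hW hW' (sub W hW V hV hxV) (sub W' hW' V' hV' hxV')
    exact (hg W hW).1.eq_of_mem hV hV' hxV hxV'
  · rintro ⟨X, hX, Y, hY, hXY, a, ha, b, hb, c, hc, d, hd, hab, hbc, hcd⟩
    obtain ⟨W, hW, hX⟩ := mem_glue.1 hX
    obtain ⟨W', hW', hY⟩ := mem_glue.1 hY
    by_cases hWW' : W = W'
    · subst hWW'
      exact (hg W hW).2 ⟨X, hX, Y, hY, hXY, a, ha, b, hb, c, hc, d, hd, hab, hbc, hcd⟩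
    · exact hnc ⟨W, hW, W', hW', hWW', a, sub W hW X hX ha, b, sub W' hW' Y hY hb,
        c, sub W hW X hX hc, d, sub W' hW' Y hY hd, hab, hbc, hcd⟩

end Glue

theorem card_filter_refines {F : Finset ℕ} {β : Finset (Finset ℕ)} (hβ : IsDisjointCover F β)
    (hnc : ¬ IsCrossing β) (P : Finset ℕ → Finset (Finset ℕ) → Prop) :
    #((ncPartitions F).filter fun α => Refines α β ∧ ∀ W ∈ β, P W (restrictL α W))
      = ∏ W ∈ β, #((ncPartitions W).filter (P W)) := by
  rw [← card_pi]
  refine card_nbij' (fun α W _ => restrictL α W) (glue β) ?_ ?_ ?_ ?_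
  · intro α hα
    simp only [coe_filter, Set.mem_ofPred_eq, mem_ncPartitions, mem_coe, mem_pi, mem_filter] at hα ⊢
    exact fun W hW => ⟨hα.1.restrictL hβ hα.2.1 hW, hα.2.2 W hW⟩
  · intro g hg
    simp only [coe_filter, Set.mem_ofPred_eq, mem_ncPartitions, mem_coe, mem_pi, mem_filter] at hg ⊢
    have hg' : ∀ W (hW : W ∈ β), IsNCPartitionOfSet W (g W hW) := fun W hW => (hg W hW).1
    refine ⟨isNCPartitionOfSet_glue hβ hnc hg', refines_glue hg', fun W hW => ?_⟩
    rw [restrictL_glue hβ hg' hW]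
    exact (hg W hW).2
  · intro α hα
    exact glue_restrictL (mem_filter.1 hα).2.1
  · intro g hg
    have hg' : ∀ W (hW : W ∈ β), IsNCPartitionOfSet W (g W hW) := fun W hW =>
      mem_ncPartitions.1 (mem_filter.1 (mem_pi.1 hg W hW)).1
    funext W hW
    exact restrictL_glue hβ hg' hW

section MoveElement

noncomputable def eraseFromBlock (γ : Finset (Finset ℕ)) (M : ℕ) : Finset (Finset ℕ) :=
  insert ((blockOf γ M).erase M) (γ.erase (blockOf γ M))

noncomputable def insertIntoBlockOf (δ : Finset (Finset ℕ)) (m M : ℕ) : Finset (Finset ℕ) :=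
  insert (insert M (blockOf δ m)) (δ.erase (blockOf δ m))

variable {F G : Finset ℕ} {γ δ : Finset (Finset ℕ)} {S T : Finset ℕ} {m M : ℕ}

lemma IsPartitionOfSet.insert_erase (hγ : IsPartitionOfSet F γ) (hS : S ∈ γ) (hT : T.Nonempty)
    (hTV : ∀ V ∈ γ, V ≠ S → V ∩ T = ∅) :
    IsPartitionOfSet (F \ S ∪ T) (insert T (γ.erase S)) := by
  have mem : ∀ {V}, V ∈ insert T (γ.erase S) ↔ V = T ∨ V ≠ S ∧ V ∈ γ := by
    simp only [mem_insert, mem_erase, implies_true]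
  refine ⟨fun V hV => ?_, fun V hV => ?_, fun x hx => ?_, fun V hV W hW hVW => ?_⟩
  · rcases mem.1 hV with rfl | ⟨-, hV⟩
    exacts [hT, hγ.1 V hV]
  · rcases mem.1 hV with rfl | ⟨hVS, hV⟩
    · exact subset_union_right
    · exact fun x hx => mem_union_left _
        (mem_sdiff.2 ⟨hγ.2.1 V hV hx, fun hxS => hVS (hγ.eq_of_mem hV hS hx hxS)⟩)
  · rcases mem_union.1 hx with hx | hx
    · obtain ⟨hxF, hxS⟩ := mem_sdiff.1 hx
      obtain ⟨V, hV, hxV⟩ := hγ.2.2.1 x hxF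
      exact ⟨V, mem.2 (Or.inr ⟨fun h => hxS (h ▸ hxV), hV⟩), hxV⟩
    · exact ⟨T, mem.2 (Or.inl rfl), hx⟩
  · rcases mem.1 hV with rfl | ⟨hVS, hVγ⟩ <;> rcases mem.1 hW with rfl | ⟨hWS, hWγ⟩
    · exact absurd rfl hVW
    · rw [inter_comm]; exact hTV W hWγ hWS
    · exact hTV V hVγ hVS
    · exact hγ.2.2.2 V hVγ W hWγ hVW

lemma insert_erase_insert_erase (hS : S ∈ γ) (hT : T ∉ γ.erase S) :
    insert S ((insert T (γ.erase S)).erase T) = γ := by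
  rw [erase_insert hT, insert_erase hS]

lemma IsPartitionOfSet.eraseFromBlock (hγ : IsPartitionOfSet F γ) (hM : M ∈ F)
    (hne : ((blockOf γ M).erase M).Nonempty) :
    IsPartitionOfSet (F.erase M) (eraseFromBlock γ M) := by
  obtain ⟨hS, hMS⟩ := hγ.blockOf_mem hM
  have hF : F \ blockOf γ M ∪ (blockOf γ M).erase M = F.erase M := by
    ext x
    simp only [mem_union, mem_sdiff, mem_erase]
    constructor
    · rintro (⟨hx, hxS⟩ | ⟨hxM, hx⟩)
      exacts [⟨fun h => hxS (h ▸ hMS), hx⟩, ⟨hxM, hγ.2.1 _ hS hx⟩]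
    · rintro ⟨hxM, hx⟩
      by_cases hxS : x ∈ blockOf γ M
      exacts [Or.inr ⟨hxM, hxS⟩, Or.inl ⟨hx, hxS⟩]
  rw [← hF]
  refine hγ.insert_erase hS hne fun V hV hVS => ?_
  rw [inter_erase, hγ.2.2.2 V hV _ hS hVS, erase_empty]

lemma not_isCrossing_eraseFromBlock (hγ : IsPartitionOfSet F γ) (hnc : ¬ IsCrossing γ)
    (hM : M ∈ F) : ¬ IsCrossing (eraseFromBlock γ M) :=
  fun h => hnc (h.of_insert_erase (hγ.blockOf_mem hM).1 (erase_subset _ _))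

lemma IsPartitionOfSet.insertIntoBlockOf (hδ : IsPartitionOfSet G δ) (hm : m ∈ G)
    (hMG : M ∉ G) : IsPartitionOfSet (insert M G) (insertIntoBlockOf δ m M) := by
  obtain ⟨hB, -⟩ := hδ.blockOf_mem hm
  have hG : G \ blockOf δ m ∪ insert M (blockOf δ m) = insert M G := by
    ext x
    simp only [mem_union, mem_sdiff, mem_insert]
    constructor
    · rintro (⟨hx, -⟩ | rfl | hx)
      exacts [Or.inr hx, Or.inl rfl, Or.inr (hδ.2.1 _ hB hx)]
    · rintro (rfl | hx)
      · exact Or.inr (Or.inl rfl)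
      · by_cases hxB : x ∈ blockOf δ m
        exacts [Or.inr (Or.inr hxB), Or.inl ⟨hx, hxB⟩]
  rw [← hG]
  refine hδ.insert_erase hB (insert_nonempty _ _) fun V hV hVB => ?_
  rw [inter_insert_of_notMem fun h => hMG (hδ.2.1 V hV h), hδ.2.2.2 V hV _ hB hVB]

/-- A crossing through the new point `M` can be rerouted through `m`. -/
lemma not_isCrossing_insertIntoBlockOf (hδ : IsNCPartitionOfSet G δ) (hm : m ∈ G)
    (hmin : ∀ x ∈ G, m ≤ x) (hM : ∀ x ∈ G, x < M) : ¬ IsCrossing (insertIntoBlockOf δ m M) := by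
  obtain ⟨hB, hmB⟩ := hδ.1.blockOf_mem hm
  set B := blockOf δ m
  have mem : ∀ {V}, V ∈ insertIntoBlockOf δ m M ↔ V = insert M B ∨ V ≠ B ∧ V ∈ δ := by
    simp only [insertIntoBlockOf, mem_insert, mem_erase, B, implies_true]
  have mem_B : ∀ {z}, z ∈ insert M B → z < M → z ∈ B := fun hz hzM =>
    (mem_insert.1 hz).resolve_left hzM.ne
  have lt_M : ∀ V ∈ δ, ∀ z ∈ V, z < M := fun V hV z hz => hM z (hδ.1.2.1 V hV hz)
  rintro ⟨X, hX, Y, hY, hXY, a, ha, b, hb, c, hc, d, hd, hab, hbc, hcd⟩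
  rcases mem.1 hX with rfl | ⟨hXB, hXδ⟩ <;> rcases mem.1 hY with rfl | ⟨hYB, hYδ⟩
  · exact hXY rfl
  · have := lt_M Y hYδ d hd
    exact hδ.2 ⟨B, hB, Y, hYδ, Ne.symm hYB, a, mem_B ha (by omega), b, hb,
      c, mem_B hc (by omega), d, hd, hab, hbc, hcd⟩
  · have hbB := mem_B hb (by have := lt_M X hXδ c hc; omega)
    rcases mem_insert.1 hd with rfl | hdB
    · have hma : m < a := (hmin a (hδ.1.2.1 X hXδ ha)).lt_of_ne fun h =>
        hXB (hδ.1.eq_of_mem hXδ hB ha (h ▸ hmB))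
      exact hδ.2 ⟨B, hB, X, hXδ, Ne.symm hXB, m, hmB, a, ha, b, hbB, c, hc, hma, hab, hbc⟩
    · exact hδ.2 ⟨X, hXδ, B, hB, hXB, a, ha, b, hbB, c, hc, d, hdB, hab, hbc, hcd⟩
  · exact hδ.2 ⟨X, hXδ, Y, hYδ, hXY, a, ha, b, hb, c, hc, d, hd, hab, hbc, hcd⟩

lemma insertIntoBlockOf_eraseFromBlock (hγ : IsPartitionOfSet F γ) (hM : M ∈ F)
    (hm : m ∈ blockOf γ M) (hmM : m ≠ M) : insertIntoBlockOf (eraseFromBlock γ M) m M = γ := by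
  obtain ⟨hS, hMS⟩ := hγ.blockOf_mem hM
  have hmS : m ∈ (blockOf γ M).erase M := mem_erase.2 ⟨hmM, hm⟩
  have hblock : blockOf (eraseFromBlock γ M) m = (blockOf γ M).erase M :=
    blockOf_eq (hγ.eraseFromBlock hM ⟨m, hmS⟩) (mem_insert_self _ _) hmS
  rw [insertIntoBlockOf, hblock, insert_erase hMS, eraseFromBlock]
  exact insert_erase_insert_erase hS fun h =>
    ne_of_mem_erase h (hγ.eq_of_mem (mem_of_mem_erase h) hS hmS hm)

lemma eraseFromBlock_insertIntoBlockOf (hδ : IsPartitionOfSet G δ) (hm : m ∈ G) (hMG : M ∉ G) :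
    eraseFromBlock (insertIntoBlockOf δ m M) M = δ := by
  obtain ⟨hB, -⟩ := hδ.blockOf_mem hm
  have hblock : blockOf (insertIntoBlockOf δ m M) M = insert M (blockOf δ m) :=
    blockOf_eq (hδ.insertIntoBlockOf hm hMG) (mem_insert_self _ _) (mem_insert_self _ _)
  rw [eraseFromBlock, hblock, erase_insert fun h => hMG (hδ.2.1 _ hB h), insertIntoBlockOf]
  exact insert_erase_insert_erase hB fun h =>
    hMG (hδ.2.1 _ (mem_of_mem_erase h) (mem_insert_self _ _))

end MoveElement

def JoinsMinMax (W : Finset ℕ) (γ : Finset (Finset ℕ)) : Prop :=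
  ∃ V ∈ γ, fmin W ∈ V ∧ fmax W ∈ V

lemma card_filter_joinsMinMax {F : Finset ℕ} (hF : F.Nonempty) :
    #((ncPartitions F).filter (JoinsMinMax F)) = #(ncPartitions (F.erase (fmax F))) := by
  obtain ⟨x, rfl⟩ | hF := hF.exists_eq_singleton_or_nontrivial
  · have hmin : fmin {x} = x := fmin_eq (mem_singleton_self x) fun y hy => (mem_singleton.1 hy).ge
    have hmax : fmax {x} = x := fmax_eq (mem_singleton_self x) fun y hy => (mem_singleton.1 hy).le
    rw [filter_true_of_mem, ncPartitions_singleton, hmax, erase_singleton, ncPartitions_empty,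
      card_singleton, card_singleton]
    intro γ hγ
    obtain ⟨V, hV, hxV⟩ := (mem_ncPartitions.1 hγ).1.2.2.1 x (mem_singleton_self x)
    exact ⟨V, hV, by rwa [hmin], by rwa [hmax]⟩
  obtain ⟨a, ha, b, hb, hab⟩ := hF
  set m := fmin F
  set M := fmax F
  have hM : M ∈ F := fmax_mem ⟨a, ha⟩
  have hmM : m < M := by
    rcases hab.lt_or_gt with h | h
    · exact (fmin_le ha).trans_lt (h.trans_le (le_fmax hb))
    · exact (fmin_le hb).trans_lt (h.trans_le (le_fmax ha))
  have hm : m ∈ F.erase M := mem_erase.2 ⟨hmM.ne, fmin_mem ⟨a, ha⟩⟩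
  have hMG : M ∉ F.erase M := notMem_erase M F
  have mem_S : ∀ {γ}, γ ∈ (ncPartitions F).filter (JoinsMinMax F) ↔
      IsNCPartitionOfSet F γ ∧ JoinsMinMax F γ := by
    simp only [mem_filter, mem_ncPartitions, implies_true]
  refine card_nbij' (fun γ => eraseFromBlock γ M) (fun δ => insertIntoBlockOf δ m M)
    (fun γ hγ => ?_) (fun δ hδ => ?_) (fun γ hγ => ?_) (fun δ hδ => ?_)
  · obtain ⟨hγ, V, hV, hmV, hMV⟩ := mem_S.1 hγ
    have hne : ((blockOf γ M).erase M).Nonempty := by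
      rw [blockOf_eq hγ.1 hV hMV]
      exact ⟨m, mem_erase.2 ⟨hmM.ne, hmV⟩⟩
    exact mem_ncPartitions.2
      ⟨hγ.1.eraseFromBlock hM hne, not_isCrossing_eraseFromBlock hγ.1 hγ.2 hM⟩
  · have hδ := mem_ncPartitions.1 hδ
    have hmin : ∀ x ∈ F.erase M, m ≤ x := fun x hx => fmin_le (mem_of_mem_erase hx)
    have hlt : ∀ x ∈ F.erase M, x < M := fun x hx =>
      (le_fmax (mem_of_mem_erase hx)).lt_of_ne (ne_of_mem_erase hx)
    have hpart := hδ.1.insertIntoBlockOf hm hMG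
    rw [insert_erase hM] at hpart
    refine mem_S.2 ⟨⟨hpart, not_isCrossing_insertIntoBlockOf hδ hm hmin hlt⟩,
      insert M (blockOf δ m), mem_insert_self _ _, ?_, mem_insert_self _ _⟩
    exact mem_insert_of_mem (hδ.1.blockOf_mem hm).2
  · obtain ⟨hγ, V, hV, hmV, hMV⟩ := mem_S.1 hγ
    refine insertIntoBlockOf_eraseFromBlock hγ.1 hM ?_ hmM.ne
    rwa [blockOf_eq hγ.1 hV hMV]
  · exact eraseFromBlock_insertIntoBlockOf (mem_ncPartitions.1 hδ).1 hm hMG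

section Catalan

variable {F : Finset ℕ} {j : ℕ}

lemma fmax_blockOf_fmin_eq_iff {α : Finset (Finset ℕ)} (hα : IsNCPartitionOfSet F α)
    (hj : j ∈ F) :
    fmax (blockOf α (fmin F)) = j ↔ Refines α {F.filter (· ≤ j), F.filter (j < ·)} ∧
      JoinsMinMax (F.filter (· ≤ j)) (restrictL α (F.filter (· ≤ j))) := by
  set m := fmin F
  set L := F.filter (· ≤ j)
  set R := F.filter (j < ·)
  have hmF : m ∈ F := fmin_mem ⟨j, hj⟩
  obtain ⟨hB, hmB⟩ := hα.1.blockOf_mem hmF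
  set B := blockOf α m
  have hminL : fmin L = m :=
    fmin_eq (mem_filter.2 ⟨hmF, fmin_le hj⟩) fun x hx => fmin_le (mem_filter.1 hx).1
  have hmaxL : fmax L = j := fmax_eq (mem_filter.2 ⟨hj, le_rfl⟩) fun x hx => (mem_filter.1 hx).2
  have mem_restrict : ∀ {V}, V ∈ restrictL α L ↔ V ∈ α ∧ V ⊆ L := mem_filter
  rw [JoinsMinMax, hminL, hmaxL]
  constructor
  · intro hBj
    have hjB : j ∈ B := hBj ▸ fmax_mem ⟨m, hmB⟩
    have hBL : B ⊆ L := fun x hx => mem_filter.2 ⟨hα.1.2.1 B hB hx, hBj ▸ le_fmax hx⟩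
    refine ⟨fun V hV => ?_, B, mem_restrict.2 ⟨hB, hBL⟩, hmB, hjB⟩
    by_cases hVL : V ⊆ L
    · exact ⟨L, mem_insert_self _ _, hVL⟩
    obtain ⟨y, hyV, hyL⟩ := not_subset.1 hVL
    have hjy : j < y := not_le.1 fun h => hyL (mem_filter.2 ⟨hα.1.2.1 V hV hyV, h⟩)
    have hVB : V ≠ B := fun h => hyL (hBL (h ▸ hyV))
    refine ⟨R, mem_insert_of_mem (mem_singleton_self _), fun x hx =>
      mem_filter.2 ⟨hα.1.2.1 V hV hx, not_le.1 fun hxj => ?_⟩⟩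
    have hmx : m < x := (fmin_le (hα.1.2.1 V hV hx)).lt_of_ne fun h =>
      hVB (hα.1.eq_of_mem hV hB hx (h ▸ hmB))
    have hxj' : x < j := hxj.lt_of_ne fun h => hVB (hα.1.eq_of_mem hV hB hx (h ▸ hjB))
    exact hα.2 ⟨B, hB, V, hV, hVB.symm, m, hmB, x, hx, j, hjB, y, hyV, hmx, hxj', hjy⟩
  · rintro ⟨-, V, hV, hmV, hjV⟩
    obtain ⟨hV, hVL⟩ := mem_restrict.1 hV
    rw [show B = V from blockOf_eq hα.1 hV hmV]
    exact fmax_eq hjV fun x hx => (mem_filter.1 (hVL hx)).2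

lemma card_filter_fmax_blockOf_fmin (hj : j ∈ F) :
    #((ncPartitions F).filter fun α => fmax (blockOf α (fmin F)) = j)
      = #(ncPartitions (F.filter (· < j))) * #(ncPartitions (F.filter (j < ·))) := by
  set L := F.filter (· ≤ j)
  set R := F.filter (j < ·)
  have hjL : j ∈ L := mem_filter.2 ⟨hj, le_rfl⟩
  have hLR : L ≠ R := fun h => lt_irrefl j (mem_filter.1 (h ▸ hjL)).2
  have hLR_disj : L ∩ R = ∅ := eq_empty_of_forall_notMem fun x hx => by
    simp only [mem_inter, mem_filter, L, R] at hx
    omega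
  have hcover : IsDisjointCover F {L, R} := by
    refine ⟨?_, fun x hx => ?_, ?_⟩
    · simp only [mem_insert, mem_singleton, forall_eq_or_imp, forall_eq]
      exact ⟨filter_subset _ _, filter_subset _ _⟩
    · rcases le_or_gt x j with h | h
      exacts [⟨L, mem_insert_self _ _, mem_filter.2 ⟨hx, h⟩⟩,
        ⟨R, mem_insert_of_mem (mem_singleton_self _), mem_filter.2 ⟨hx, h⟩⟩]
    · simp only [mem_insert, mem_singleton]
      rintro V (rfl | rfl) W (rfl | rfl) hVW
      exacts [absurd rfl hVW, hLR_disj, inter_comm L R ▸ hLR_disj, absurd rfl hVW]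
  have hnc : ¬ IsCrossing {L, R} := not_isCrossing_pair fun x hx y hy =>
    (mem_filter.1 hx).2.trans_lt (mem_filter.1 hy).2
  have hfiber : ((ncPartitions F).filter fun α => fmax (blockOf α (fmin F)) = j) =
      (ncPartitions F).filter fun α =>
        Refines α {L, R} ∧ ∀ W ∈ ({L, R} : Finset _), W = L → JoinsMinMax W (restrictL α W) := by
    refine filter_congr fun α hα => ?_
    rw [fmax_blockOf_fmin_eq_iff (mem_ncPartitions.1 hα) hj]
    simp only [mem_insert, mem_singleton, forall_eq_or_imp, forall_eq, hLR.symm, false_imp_iff,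
      and_true, true_imp_iff]
    exact Iff.rfl
  have hL : L.erase (fmax L) = F.filter (· < j) := by
    rw [fmax_eq hjL fun x hx => (mem_filter.1 hx).2]
    ext x
    simp only [mem_erase, mem_filter, L]
    exact ⟨fun ⟨hxj, hx, hxj'⟩ => ⟨hx, lt_of_le_of_ne hxj' hxj⟩,
      fun ⟨hx, hxj⟩ => ⟨hxj.ne, hx, hxj.le⟩⟩
  rw [hfiber]
  -- `convert` only reconciles the decidability instances of the two filters
  convert card_filter_refines hcover hnc (fun W γ => W = L → JoinsMinMax W γ) using 3
  simp only [prod_pair hLR, hLR.symm, false_implies, true_implies, filter_true]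
  rw [card_filter_joinsMinMax ⟨j, hjL⟩, hL]

lemma card_filter_lt_add_card_filter_gt (hj : j ∈ F) :
    #(F.filter (· < j)) + #(F.filter (j < ·)) + 1 = #F := by
  have : F.filter (¬ · < j) = insert j (F.filter (j < ·)) := by
    ext x
    simp only [mem_filter, mem_insert]
    constructor
    · rintro ⟨hx, hxj⟩
      rcases (not_lt.1 hxj).eq_or_lt with h | h
      exacts [Or.inl h.symm, Or.inr ⟨hx, h⟩]
    · rintro (rfl | ⟨hx, h⟩)
      exacts [⟨hj, lt_irrefl _⟩, ⟨hx, h.not_gt⟩]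
  have hcard := card_filter_add_card_filter_not (s := F) (· < j)
  rw [this, card_insert_of_notMem fun h => lt_irrefl j (mem_filter.1 h).2] at hcard
  omega

lemma sum_card_filter_lt {M : Type*} [AddCommMonoid M] (F : Finset ℕ) (g : ℕ → M) :
    ∑ j ∈ F, g #(F.filter (· < j)) = ∑ i ∈ range #F, g i := by
  have hlt : ∀ {a b}, a ∈ F → a < b → #(F.filter (· < a)) < #(F.filter (· < b)) := by
    intro a b ha hab
    refine card_lt_card ((ssubset_iff_of_subset fun x hx => ?_).2 ⟨a, ?_, ?_⟩)
    · exact mem_filter.2 ⟨(mem_filter.1 hx).1, (mem_filter.1 hx).2.trans hab⟩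
    · exact mem_filter.2 ⟨ha, hab⟩
    · simp
  have hinj : Set.InjOn (fun j => #(F.filter (· < j))) F := by
    intro a ha b hb hab
    by_contra hne
    rcases lt_or_gt_of_ne hne with h | h
    exacts [(hlt ha h).ne hab, (hlt hb h).ne hab.symm]
  rw [← sum_image hinj]
  congr 1
  refine eq_of_subset_of_card_le (fun i hi => ?_) (by rw [card_range, card_image_of_injOn hinj])
  obtain ⟨j, hj, rfl⟩ := mem_image.1 hi
  exact mem_range.2 (card_lt_card (filter_ssubset.2 ⟨j, hj, lt_irrefl j⟩))

theorem card_ncPartitions (F : Finset ℕ) : #(ncPartitions F) = catalan #F := by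
  induction hk : #F using Nat.strong_induction_on generalizing F with
  | _ k ih =>
  obtain rfl | hF := F.eq_empty_or_nonempty
  · rw [← hk, ncPartitions_empty, card_singleton, card_empty, catalan_zero]
  obtain ⟨k, rfl⟩ : ∃ k', k = k' + 1 := Nat.exists_eq_succ_of_ne_zero (hk ▸ hF.card_pos.ne')
  have hmaps : ∀ α ∈ ncPartitions F, fmax (blockOf α (fmin F)) ∈ F := fun α hα => by
    obtain ⟨hB, hmB⟩ := (mem_ncPartitions.1 hα).1.blockOf_mem (fmin_mem hF)
    exact (mem_ncPartitions.1 hα).1.2.1 _ hB (fmax_mem ⟨_, hmB⟩)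
  have hfiber : ∀ j ∈ F, #((ncPartitions F).filter fun α => fmax (blockOf α (fmin F)) = j)
      = catalan #(F.filter (· < j)) * catalan (k - #(F.filter (· < j))) := fun j hj => by
    have hcard := card_filter_lt_add_card_filter_gt hj
    rw [card_filter_fmax_blockOf_fmin hj, ih _ (by omega) _ rfl, ih _ (by omega) _ rfl]
    congr 2
    omega
  rw [card_eq_sum_card_fiberwise hmaps, sum_congr rfl hfiber,
    sum_card_filter_lt F fun i => catalan i * catalan (k - i), hk, catalan_succ,
    Fin.sum_univ_eq_sum_range fun i => catalan i * catalan (k - i)]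

end Catalan

lemma LL_iff {F : Finset ℕ} {α β : Finset (Finset ℕ)} (hβ : IsPartitionOfSet F β) :
    LL α β ↔ Refines α β ∧ ∀ W ∈ β, JoinsMinMax W (restrictL α W) := by
  refine and_congr_right fun hαβ => forall₂_congr fun W hW => ⟨?_, ?_⟩
  · rintro ⟨V, hV, hmin, hmax⟩
    obtain ⟨W', hW', hVW'⟩ := hαβ V hV
    obtain rfl := hβ.eq_of_mem hW' hW (hVW' hmin) (fmin_mem (hβ.1 W hW))
    exact ⟨V, mem_filter.2 ⟨hV, hVW'⟩, hmin, hmax⟩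
  · rintro ⟨V, hV, hmin, hmax⟩
    exact ⟨V, (mem_filter.1 hV).1, hmin, hmax⟩

/-- Let `β = {W₁,…,W_q} ∈ NC(n)`. Then the number of `α ∈ NC(n)` with
`α ≪ β` equals `∏_j Cat_{|W_j| - 1}`. -/
theorem stmt5 (n : ℕ) (β : Finset (Finset ℕ)) (hβ : IsNCPartition n β) :
    {α : Finset (Finset ℕ) | IsNCPartition n α ∧ LL α β}.ncard
      = ∏ W ∈ β, catalan (W.card - 1) := by
  have hset : {α : Finset (Finset ℕ) | IsNCPartition n α ∧ LL α β} =
      ↑((ncPartitions (Icc 1 n)).filter fun α =>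
        Refines α β ∧ ∀ W ∈ β, JoinsMinMax W (restrictL α W)) := by
    ext α
    simp only [Set.mem_ofPred_eq, coe_filter, mem_ncPartitions, LL_iff hβ.1]
    rfl
  rw [hset, Set.ncard_coe_finset, card_filter_refines hβ.1.isDisjointCover hβ.2]
  refine prod_congr rfl fun W hW => ?_
  rw [card_filter_joinsMinMax (hβ.1.1 W hW), card_ncPartitions,
    card_erase_of_mem (fmax_mem (hβ.1.1 W hW))]
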